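/- arXiv:2104.04555 — 7 statements merged into one kernel-verified Lean document; each statement's English description precedes it below -/
import Mathlib

section
/- Let v : ℝ → ℝ be continuous, even, and 2π-periodic. Suppose there exists ε > 0 such that v(η + θ) ≥ v(η - θ) for all η ∈ (0, ε) and all θ ∈ (0, π). Then v is nondecreasing on (0, π). -/
/-!
Reflecting about η = (y - x)/2 with θ = (x + y)/2 sends η - θ to -x and η + θ to y, so evenness
turns the hypothesis into v x ≤ v y whenever 0 < x < y < π and y - x < 2ε. Monotonicity on
(0, π) follows by chaining such short steps.
-/

open Real Set

theorem monotoneOn_of_forall_lt_of_sub_lt {α β : Type*} [Field α] [LinearOrder α]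
    [IsStrictOrderedRing α] [Archimedean α] [Preorder β] {f : α → β} {s : Set α} {δ : α}
    (hs : s.OrdConnected) (hδ : 0 < δ)
    (h : ∀ x ∈ s, ∀ y ∈ s, x < y → y - x < δ → f x ≤ f y) : MonotoneOn f s := by
  have chain : ∀ n : ℕ, ∀ x ∈ s, ∀ y ∈ s, x ≤ y → y - x ≤ n * (δ / 2) → f x ≤ f y := by
    intro n
    induction n with
    | zero =>
      intro x _ y _ hxy hyx
      rw [le_antisymm hxy (by simpa [sub_nonpos] using hyx)]
    | succ n ih =>
      intro x hx y hy hxy hyx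
      by_cases hnear : y - x < δ
      · rcases hxy.eq_or_lt with rfl | hlt
        · exact le_rfl
        · exact h x hx y hy hlt hnear
      · have hxz : x ≤ y - δ / 2 := by linarith
        have hz : y - δ / 2 ∈ s := hs.out hx hy ⟨hxz, by linarith⟩
        push_cast at hyx
        exact (ih x hx _ hz hxz (by linarith)).trans (h _ hz y hy (by linarith) (by linarith))
  intro x hx y hy hxy
  obtain ⟨n, hn⟩ := Archimedean.arch (y - x) (half_pos hδ)
  exact chain n x hx y hy hxy (by rwa [nsmul_eq_mul] at hn)

theorem le_of_reflection_le {v : ℝ → ℝ} (heven : ∀ θ : ℝ, v (-θ) = v θ) {ε : ℝ}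
    (hrefl : ∀ η θ : ℝ, 0 < η → η < ε → 0 < θ → θ < π → v (η - θ) ≤ v (η + θ))
    {x y : ℝ} (hx : 0 < x) (hy : y < π) (hxy : x < y) (hyx : y - x < 2 * ε) : v x ≤ v y := by
  have h := hrefl ((y - x) / 2) ((x + y) / 2) (by linarith) (by linarith) (by linarith)
    (by linarith)
  rwa [show (y - x) / 2 - (x + y) / 2 = -x by ring, show (y - x) / 2 + (x + y) / 2 = y by ring,
    heven] at h

theorem asymptotic_symmetry_stmt_0_general (v : ℝ → ℝ)
    (heven : ∀ θ : ℝ, v (-θ) = v θ)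
    (ε : ℝ) (hε : 0 < ε)
    (hrefl : ∀ η θ : ℝ, 0 < η → η < ε → 0 < θ → θ < π → v (η - θ) ≤ v (η + θ)) :
    MonotoneOn v (Ioo 0 π) :=
  monotoneOn_of_forall_lt_of_sub_lt ordConnected_Ioo (by positivity)
    fun _ hx _ hy hxy hyx => le_of_reflection_le heven hrefl hx.1 hy.2 hxy hyx

theorem asymptotic_symmetry_stmt_0 (v : ℝ → ℝ) (hv : Continuous v)
    (heven : ∀ θ : ℝ, v (-θ) = v θ)
    (hper : ∀ θ : ℝ, v (θ + 2 * π) = v θ)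
    (ε : ℝ) (hε : 0 < ε)
    (hrefl : ∀ η θ : ℝ, 0 < η → η < ε → 0 < θ → θ < π → v (η - θ) ≤ v (η + θ)) :
    MonotoneOn v (Ioo 0 π) :=
  asymptotic_symmetry_stmt_0_general v heven ε hε hrefl
end

section
/- Let v : ℝ → ℝ be continuous, even, and 2π-periodic. Suppose there exists ε > 0 such that v(η + θ) ≥ v(η - θ) for all η ∈ (0, ε) and all θ ∈ (0, π). Then v(η + θ) ≥ v(η - θ) for all η, θ ∈ (0, π). -/
/-! With `η = (b - a) / 2` and `θ = (a + b) / 2`, the hypothesis together with evenness says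
`v a ≤ v b` whenever `0 ≤ a < b ≤ π` and `b - a < 2ε`. Chaining such short steps shows that `v` is
nondecreasing on `[0, π]`. By evenness and `2π`-periodicity, `v (η - θ) = v |η - θ|` and
`v (η + θ) = v (2π - (η + θ))`, and `|η - θ|` is at most whichever of `η + θ`, `2π - (η + θ)` lies
in `[0, π]`. -/

open Real Set

theorem monotoneOn_Icc_of_le_of_sub_lt {β : Type*} [Preorder β] {f : ℝ → β} {a b δ : ℝ}
    (hδ : 0 < δ) (hstep : ∀ x ∈ Icc a b, ∀ y ∈ Icc a b, x < y → y - x < δ → f x ≤ f y) :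
    MonotoneOn f (Icc a b) := by
  suffices key : ∀ n : ℕ, ∀ x ∈ Icc a b, ∀ y ∈ Icc a b, x ≤ y → y - x ≤ n * (δ / 2) → f x ≤ f y by
    intro x hx y hy hxy
    obtain ⟨n, hn⟩ := exists_nat_ge ((y - x) / (δ / 2))
    exact key n x hx y hy hxy ((div_le_iff₀ (by positivity)).mp hn)
  intro n
  induction n with
  | zero =>
    intro x _ y _ hxy hyx
    rw [le_antisymm hxy (by simpa [sub_nonpos] using hyx)]
  | succ n ih =>
    intro x hx y hy hxy hyx
    rcases lt_or_ge (y - x) δ with hclose | hfar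
    · rcases hxy.eq_or_lt with rfl | hlt
      · exact le_rfl
      · exact hstep x hx y hy hlt hclose
    · have hmid : x + δ / 2 ∈ Icc a b := ⟨by linarith [hx.1], by linarith [hy.2]⟩
      calc f x ≤ f (x + δ / 2) := hstep x hx _ hmid (by linarith) (by linarith)
        _ ≤ f y := ih _ hmid y hy (by linarith) (by push_cast at hyx; linarith)

section Even

variable {v : ℝ → ℝ} (heven : ∀ θ : ℝ, v (-θ) = v θ)
include heven

theorem apply_abs_of_even (x : ℝ) : v |x| = v x := by
  rcases abs_choice x with h | h <;> rw [h]
  exact heven x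

theorem apply_two_pi_sub_of_even (hper : ∀ θ : ℝ, v (θ + 2 * π) = v θ) (x : ℝ) :
    v (2 * π - x) = v x := by
  rw [← heven, ← hper, neg_sub, sub_add_cancel]

theorem monotoneOn_Icc_zero_pi_of_reflection {ε : ℝ} (hε : 0 < ε)
    (hrefl : ∀ η θ : ℝ, 0 < η → η < ε → 0 < θ → θ < π → v (η - θ) ≤ v (η + θ)) :
    MonotoneOn v (Icc 0 π) :=
  monotoneOn_Icc_of_le_of_sub_lt (δ := 2 * ε) (by positivity) fun a ha b hb hab hba => by
    have h := hrefl ((b - a) / 2) ((a + b) / 2) (by linarith) (by linarith)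
      (by linarith [ha.1]) (by linarith [hb.2])
    rwa [show (b - a) / 2 - (a + b) / 2 = -a by ring,
      show (b - a) / 2 + (a + b) / 2 = b by ring, heven] at h

end Even

theorem asymptotic_symmetry_stmt_1_general (v : ℝ → ℝ)
    (heven : ∀ θ : ℝ, v (-θ) = v θ)
    (hper : ∀ θ : ℝ, v (θ + 2 * π) = v θ)
    (ε : ℝ) (hε : 0 < ε)
    (hrefl : ∀ η θ : ℝ, 0 < η → η < ε → 0 < θ → θ < π → v (η - θ) ≤ v (η + θ)) :
    ∀ η ∈ Ioo (0:ℝ) π, ∀ θ ∈ Ioo (0:ℝ) π, v (η - θ) ≤ v (η + θ) := by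
  rintro η ⟨hη0, hηπ⟩ θ ⟨hθ0, hθπ⟩
  have hmono := monotoneOn_Icc_zero_pi_of_reflection heven hε hrefl
  have habs : |η - θ| ∈ Icc 0 π :=
    ⟨abs_nonneg _, abs_le.mpr ⟨by linarith, by linarith⟩⟩
  rw [← apply_abs_of_even heven]
  rcases le_or_gt (η + θ) π with hle | hgt
  · exact hmono habs ⟨by linarith, hle⟩ (abs_le.mpr ⟨by linarith, by linarith⟩)
  · rw [← apply_two_pi_sub_of_even heven hper (η + θ)]
    exact hmono habs ⟨by linarith, by linarith⟩ (abs_le.mpr ⟨by linarith, by linarith⟩)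

theorem asymptotic_symmetry_stmt_1 (v : ℝ → ℝ) (hv : Continuous v)
    (heven : ∀ θ : ℝ, v (-θ) = v θ)
    (hper : ∀ θ : ℝ, v (θ + 2 * π) = v θ)
    (ε : ℝ) (hε : 0 < ε)
    (hrefl : ∀ η θ : ℝ, 0 < η → η < ε → 0 < θ → θ < π → v (η - θ) ≤ v (η + θ)) :
    ∀ η ∈ Ioo (0:ℝ) π, ∀ θ ∈ Ioo (0:ℝ) π, v (η - θ) ≤ v (η + θ) :=
  asymptotic_symmetry_stmt_1_general v heven hper ε hε hrefl
end

section
/- Let v : ℝ → ℝ be continuous, even, and 2π-periodic. Suppose there exists ε > 0 such that v(η + θ) > v(η - θ) for all η ∈ (0, ε) and all θ ∈ (0, π). Then v is strictly increasing on (0, π), and moreover v(η + θ) > v(η - θ) for all η, θ ∈ (0, π). -/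
/-!
Taking `η = s / 2` and `θ = a + s / 2` in the hypothesis and using evenness gives
`v a < v (a + s)` for `0 ≤ a`, `a + s ≤ π` and `0 < s < 2ε`; chaining such short steps makes `v`
strictly increasing on `[0, π]`. For `η, θ ∈ (0, π)`, evenness and `2π`-periodicity fold `η - θ`
and `η + θ` into `[0, π]` as `|η - θ|` and `min (η + θ) (2π - (η + θ))`, and the former is the
smaller one.
-/

open Real Set

theorem strictMonoOn_of_lt_of_sub_le {α β : Type*} [AddCommGroup α] [LinearOrder α]
    [IsOrderedAddMonoid α] [Archimedean α] [Preorder β] {f : α → β} {s : Set α}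
    (hs : s.OrdConnected) {δ : α} (hδ : 0 < δ)
    (hstep : ∀ a ∈ s, ∀ b ∈ s, a < b → b - a ≤ δ → f a < f b) : StrictMonoOn f s := by
  suffices key : ∀ n : ℕ, ∀ a ∈ s, ∀ b ∈ s, a < b → b - a ≤ n • δ → f a < f b by
    intro a ha b hb hab
    obtain ⟨n, hn⟩ := Archimedean.arch (b - a) hδ
    exact key n a ha b hb hab hn
  intro n
  induction n with
  | zero =>
    intro a _ b _ hab hle
    exact absurd hle (by simpa using hab)
  | succ n ih =>
    intro a ha b hb hab hle
    rcases le_or_gt (b - a) δ with hshort | hlong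
    · exact hstep a ha b hb hab hshort
    · have hmid_lt : a + δ < b := lt_sub_iff_add_lt'.1 hlong
      have hmid : a + δ ∈ s := hs.out ha hb ⟨by simpa using hδ.le, hmid_lt.le⟩
      have hfirst : f a < f (a + δ) := hstep a ha _ hmid (by simpa using hδ) (by simp)
      have hrest : b - (a + δ) ≤ n • δ := by
        rw [sub_add_eq_sub_sub, sub_le_iff_le_add, ← succ_nsmul]
        exact hle
      exact hfirst.trans (ih _ hmid b hb hmid_lt hrest)

section

variable {v : ℝ → ℝ}

theorem strictMonoOn_Icc_of_reflection_lt (heven : Function.Even v) {ε : ℝ} (hε : 0 < ε)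
    (hrefl : ∀ η θ : ℝ, 0 < η → η < ε → 0 < θ → θ < π → v (η - θ) < v (η + θ)) :
    StrictMonoOn v (Icc 0 π) := by
  refine strictMonoOn_of_lt_of_sub_le ordConnected_Icc hε fun a ha b hb hab hsub => ?_
  have h := hrefl ((b - a) / 2) ((a + b) / 2) (by linarith) (by linarith) (by linarith [ha.1])
    (by linarith [hb.2])
  rwa [show (b - a) / 2 - (a + b) / 2 = -a by ring, show (b - a) / 2 + (a + b) / 2 = b by ring,
    heven] at h

theorem reflection_lt_of_strictMonoOn_Icc (heven : Function.Even v)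
    (hper : Function.Periodic v (2 * π)) (hmono : StrictMonoOn v (Icc 0 π)) :
    ∀ η ∈ Ioo (0:ℝ) π, ∀ θ ∈ Ioo (0:ℝ) π, v (η - θ) < v (η + θ) := by
  rintro η ⟨hη₀, hηπ⟩ θ ⟨hθ₀, hθπ⟩
  have habs : v (η - θ) = v |η - θ| := by
    rcases abs_choice (η - θ) with h | h <;> rw [h]
    exact (heven _).symm
  have habs_mem : |η - θ| ∈ Icc 0 π := ⟨abs_nonneg _, abs_sub_le_iff.2 ⟨by linarith, by linarith⟩⟩
  rw [habs]
  rcases le_or_gt (η + θ) π with hsum | hsum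
  · exact hmono habs_mem ⟨by linarith, hsum⟩ (abs_sub_lt_iff.2 ⟨by linarith, by linarith⟩)
  · have hfold : v (η + θ) = v (2 * π - (η + θ)) := by rw [hper.sub_eq', heven]
    rw [hfold]
    exact hmono habs_mem ⟨by linarith, by linarith⟩ (abs_sub_lt_iff.2 ⟨by linarith, by linarith⟩)

end

theorem asymptotic_symmetry_stmt_2_general (v : ℝ → ℝ)
    (heven : ∀ θ : ℝ, v (-θ) = v θ)
    (hper : ∀ θ : ℝ, v (θ + 2 * π) = v θ)
    (ε : ℝ) (hε : 0 < ε)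
    (hrefl : ∀ η θ : ℝ, 0 < η → η < ε → 0 < θ → θ < π → v (η - θ) < v (η + θ)) :
    StrictMonoOn v (Ioo 0 π) ∧
      ∀ η ∈ Ioo (0:ℝ) π, ∀ θ ∈ Ioo (0:ℝ) π, v (η - θ) < v (η + θ) := by
  have hmono : StrictMonoOn v (Icc 0 π) := strictMonoOn_Icc_of_reflection_lt heven hε hrefl
  exact ⟨hmono.mono Ioo_subset_Icc_self, reflection_lt_of_strictMonoOn_Icc heven hper hmono⟩

theorem asymptotic_symmetry_stmt_2 (v : ℝ → ℝ) (hv : Continuous v)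
    (heven : ∀ θ : ℝ, v (-θ) = v θ)
    (hper : ∀ θ : ℝ, v (θ + 2 * π) = v θ)
    (ε : ℝ) (hε : 0 < ε)
    (hrefl : ∀ η θ : ℝ, 0 < η → η < ε → 0 < θ → θ < π → v (η - θ) < v (η + θ)) :
    StrictMonoOn v (Ioo 0 π) ∧
      ∀ η ∈ Ioo (0:ℝ) π, ∀ θ ∈ Ioo (0:ℝ) π, v (η - θ) < v (η + θ) :=
  asymptotic_symmetry_stmt_2_general v heven hper ε hε hrefl
end

section
/- Let v : ℝ → ℝ be continuous, even, and 2π-periodic, and let R = {η ∈ ℝ : v(2η - φ) = v(φ) for all φ ∈ ℝ} be its set of points of reflectional symmetry. If for some η ∈ ℝ one has v(η + φ) ≥ v(η - φ) for all φ ∈ [0, π] and v(η + φ₀) > v(η - φ₀) for some φ₀ ∈ (0, π), then R = {nπ : n ∈ ℤ}. -/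
/-!
If `η` is a point of reflectional symmetry of the even function `v`, then `2η` is a period of `v`.
Reducing `2η` modulo `2π` into `[-π, π)` gives a period `t` with `|t| ≤ π`, which vanishes exactly
when `η ∈ πℤ`. A period `a ∈ (0, π]` is impossible: it would propagate the inequality
`v (η₀ - φ) ≤ v (η₀ + φ)` from `[0, a)` to every `φ`, and at `φ = -φ₀` this contradicts the strict
inequality.
-/

open Real Set

namespace Function.Periodic

variable {α β : Type*}

protected theorem abs [AddCommGroup α] [LinearOrder α] {f : α → β} {c : α}
    (h : Periodic f c) : Periodic f |c| := by
  rcases abs_choice c with hc | hc <;> rw [hc]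
  exacts [h, h.neg]

section Archimedean

variable [AddCommGroup α] [LinearOrder α] [IsOrderedAddMonoid α] [Archimedean α]
  {f : α → β} {c p : α}

protected theorem toIcoMod (hc : Periodic f c) (hp : Periodic f p) (hp0 : 0 < p) (a : α) :
    Periodic f (toIcoMod hp0 a c) := by
  rw [← self_sub_toIcoDiv_zsmul]
  exact hc.sub_period (hp.zsmul _)

theorem forall_of_forall_Ico (hp : Periodic f p) (hp0 : 0 < p) (r : β → β → Prop) (x : α)
    (h : ∀ φ ∈ Ico 0 p, r (f (x - φ)) (f (x + φ))) (φ : α) : r (f (x - φ)) (f (x + φ)) := by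
  have hsub : x - φ = x - toIcoMod hp0 0 φ - toIcoDiv hp0 0 φ • p := by
    rw [← self_sub_toIcoDiv_zsmul]; abel
  have hadd : x + φ = x + toIcoMod hp0 0 φ + toIcoDiv hp0 0 φ • p := by
    rw [← self_sub_toIcoDiv_zsmul]; abel
  rw [hsub, hadd, hp.sub_zsmul_eq, hp.zsmul _ _]
  exact h _ (by simpa using toIcoMod_mem_Ico hp0 0 φ)

end Archimedean

end Function.Periodic

theorem periodic_two_mul_iff_of_even {α β : Type*} [Ring α] {f : α → β}
    (heven : ∀ θ, f (-θ) = f θ) (η : α) :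
    Function.Periodic f (2 * η) ↔ ∀ φ, f (2 * η - φ) = f φ := by
  refine ⟨fun h φ => ?_, fun h φ => ?_⟩
  · rw [sub_eq_neg_add, h, heven]
  · rw [add_comm, ← sub_neg_eq_add, h, heven]

theorem not_periodic_of_forall_le_of_lt {v : ℝ → ℝ} {η₀ φ₀ a : ℝ}
    (hge : ∀ φ ∈ Icc (0:ℝ) π, v (η₀ - φ) ≤ v (η₀ + φ)) (hstrict : v (η₀ - φ₀) < v (η₀ + φ₀))
    (ha : a ∈ Ioc 0 π) : ¬ Function.Periodic v a := fun hper => by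
  have hle := hper.forall_of_forall_Ico ha.1 (· ≤ ·) η₀
    (fun φ hφ => hge φ ⟨hφ.1, hφ.2.le.trans ha.2⟩) (-φ₀)
  rw [sub_neg_eq_add, ← sub_eq_add_neg] at hle
  exact hle.not_gt hstrict

theorem asymptotic_symmetry_stmt_3_general (v : ℝ → ℝ)
    (heven : ∀ θ : ℝ, v (-θ) = v θ)
    (hper : ∀ θ : ℝ, v (θ + 2 * π) = v θ)
    (η₀ : ℝ)
    (hge : ∀ φ ∈ Icc (0:ℝ) π, v (η₀ - φ) ≤ v (η₀ + φ))
    (φ₀ : ℝ)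
    (hstrict : v (η₀ - φ₀) < v (η₀ + φ₀)) :
    {η : ℝ | ∀ φ : ℝ, v (2 * η - φ) = v φ} = {x : ℝ | ∃ n : ℤ, x = n * π} := by
  have h2π : Function.Periodic v (2 * π) := hper
  ext η
  simp only [mem_ofPred_eq, ← periodic_two_mul_iff_of_even heven]
  constructor
  · intro hη
    set t := toIcoMod two_pi_pos (-π) (2 * η) with ht
    have ht_mem : t ∈ Ico (-π) π := by
      simpa only [← ht, show -π + 2 * π = π by ring] using toIcoMod_mem_Ico two_pi_pos (-π) (2 * η)
    have ht0 : t = 0 := by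
      by_contra ht0
      exact not_periodic_of_forall_le_of_lt hge hstrict
        ⟨abs_pos.mpr ht0, abs_le.mpr ⟨ht_mem.1, ht_mem.2.le⟩⟩ (hη.toIcoMod h2π two_pi_pos _).abs
    refine ⟨toIcoDiv two_pi_pos (-π) (2 * η), ?_⟩
    rw [ht, ← self_sub_toIcoDiv_zsmul, sub_eq_zero, zsmul_eq_mul] at ht0
    linarith
  · rintro ⟨n, rfl⟩
    simpa [mul_left_comm] using h2π.int_mul n

theorem asymptotic_symmetry_stmt_3 (v : ℝ → ℝ) (hv : Continuous v)
    (heven : ∀ θ : ℝ, v (-θ) = v θ)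
    (hper : ∀ θ : ℝ, v (θ + 2 * π) = v θ)
    (η₀ : ℝ)
    (hge : ∀ φ ∈ Icc (0:ℝ) π, v (η₀ - φ) ≤ v (η₀ + φ))
    (φ₀ : ℝ) (hφ₀ : φ₀ ∈ Ioo (0:ℝ) π)
    (hstrict : v (η₀ - φ₀) < v (η₀ + φ₀)) :
    {η : ℝ | ∀ φ : ℝ, v (2 * η - φ) = v φ} = {x : ℝ | ∃ n : ℤ, x = n * π} :=
  asymptotic_symmetry_stmt_3_general v heven hper η₀ hge φ₀ hstrict
end

section
/- Let v : ℝ → ℝ be continuous, even, and 2π-periodic. Suppose there exists ε ∈ (0, π) such that v(η + θ) ≥ v(η - θ) for all η ∈ (-ε, ε) and all θ ∈ (0, π). Then v is constant. -/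
/-!
Applying the inequality at `η` and at `-η` and using evenness turns it into the symmetry
`v (η - θ) = v (η + θ)` for `0 < θ < π`, and `2π`-periodicity extends this to all `θ`. A function
symmetric about both `0` and `η` has period `2η`, so every `s ∈ (0, ε)` is a period of `v`; since
every positive real is a natural multiple of such an `s`, every real is a period and `v` is constant.
-/

open Real Set Function

theorem Function.Periodic.apply_sub_eq_apply_add_of_mem_Ioo {v : ℝ → ℝ} {a c : ℝ} (ha : 0 < a)
    (hper : Periodic v (2 * a)) (hsymm : ∀ θ ∈ Ioo 0 a, v (c - θ) = v (c + θ)) (θ : ℝ) :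
    v (c - θ) = v (c + θ) := by
  have h2a : 0 < 2 * a := by positivity
  set φ := toIocMod h2a (-a) θ
  obtain ⟨hlo, hhi⟩ : φ ∈ Ioc (-a) a := by
    simpa [show -a + 2 * a = a by ring] using toIocMod_mem_Ioc h2a (-a) θ
  suffices v (c - φ) = v (c + φ) by
    rw [← toIocMod_add_toIocDiv_zsmul h2a (-a) θ, ← sub_sub, hper.sub_zsmul_eq, ← add_assoc,
      hper.zsmul]
    exact this
  rcases lt_trichotomy φ 0 with hneg | hzero | hpos
  · simpa [sub_eq_add_neg] using (hsymm (-φ) ⟨neg_pos.mpr hneg, by linarith⟩).symm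
  · rw [hzero, sub_zero, add_zero]
  · rcases hhi.lt_or_eq with hlt | htop
    · exact hsymm φ ⟨hpos, hlt⟩
    · rw [htop, show c + a = c - a + 2 * a by ring, hper]

theorem apply_eq_of_forall_periodic_of_mem_Ioo {v : ℝ → ℝ} {δ : ℝ} (hδ : 0 < δ)
    (hsmall : ∀ s ∈ Ioo 0 δ, Periodic v s) (x y : ℝ) : v x = v y := by
  have hpos : ∀ d, 0 < d → Periodic v d := by
    intro d hd
    obtain ⟨n, hn⟩ := exists_nat_gt (d / δ)
    have hn0 : (0 : ℝ) < n := (div_pos hd hδ).trans hn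
    have hdn : d / n < δ := (div_lt_iff₀ hn0).2 (by rwa [div_lt_iff₀ hδ, mul_comm] at hn)
    simpa [mul_div_cancel₀ d hn0.ne'] using (hsmall (d / n) ⟨by positivity, hdn⟩).nat_mul n
  rcases lt_trichotomy x y with hxy | rfl | hxy
  · simpa using (hpos (y - x) (sub_pos.2 hxy) x).symm
  · rfl
  · simpa using hpos (x - y) (sub_pos.2 hxy) y

theorem apply_sub_eq_apply_add_of_apply_sub_le_apply_add {v : ℝ → ℝ} (heven : Function.Even v)
    {ε a : ℝ} (hrefl : ∀ η θ : ℝ, -ε < η → η < ε → 0 < θ → θ < a → v (η - θ) ≤ v (η + θ))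
    {η θ : ℝ} (hη : η ∈ Ioo (-ε) ε) (hθ : θ ∈ Ioo 0 a) : v (η - θ) = v (η + θ) := by
  refine le_antisymm (hrefl η θ hη.1 hη.2 hθ.1 hθ.2) ?_
  have hreflected := hrefl (-η) θ (by linarith [hη.2]) (by linarith [hη.1]) hθ.1 hθ.2
  rwa [show -η - θ = -(η + θ) by ring, show -η + θ = -(η - θ) by ring, heven, heven]
    at hreflected

theorem periodic_two_mul_of_even_of_symmetric {v : ℝ → ℝ} (heven : Function.Even v) {η : ℝ}
    (hsymm : ∀ θ, v (η - θ) = v (η + θ)) : Periodic v (2 * η) := fun x => by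
  simpa [show η + (x + η) = x + 2 * η by ring, heven x] using (hsymm (x + η)).symm

theorem asymptotic_symmetry_stmt_4_general (v : ℝ → ℝ)
    (heven : ∀ θ : ℝ, v (-θ) = v θ)
    (hper : ∀ θ : ℝ, v (θ + 2 * π) = v θ)
    (ε : ℝ) (hε : 0 < ε)
    (hrefl : ∀ η θ : ℝ, -ε < η → η < ε → 0 < θ → θ < π → v (η - θ) ≤ v (η + θ)) :
    ∀ x y : ℝ, v x = v y := by
  have hsymm : ∀ η ∈ Ioo (-ε) ε, ∀ θ, v (η - θ) = v (η + θ) := fun η hη =>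
    Periodic.apply_sub_eq_apply_add_of_mem_Ioo pi_pos hper fun _ hθ =>
      apply_sub_eq_apply_add_of_apply_sub_le_apply_add heven hrefl hη hθ
  refine apply_eq_of_forall_periodic_of_mem_Ioo hε fun s hs => ?_
  have hs2 : s / 2 ∈ Ioo (-ε) ε := ⟨by linarith [hs.1], by linarith [hs.2]⟩
  simpa [mul_div_cancel₀] using periodic_two_mul_of_even_of_symmetric heven (hsymm _ hs2)

theorem asymptotic_symmetry_stmt_4 (v : ℝ → ℝ) (hv : Continuous v)
    (heven : ∀ θ : ℝ, v (-θ) = v θ)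
    (hper : ∀ θ : ℝ, v (θ + 2 * π) = v θ)
    (ε : ℝ) (hε : 0 < ε) (hεπ : ε < π)
    (hrefl : ∀ η θ : ℝ, -ε < η → η < ε → 0 < θ → θ < π → v (η - θ) ≤ v (η + θ)) :
    ∀ x y : ℝ, v x = v y :=
  asymptotic_symmetry_stmt_4_general v heven hper ε hε hrefl
end

section
/- Let U ⊆ Sⁿ⁻¹ (the unit sphere in ℝ^N, N ≥ 2) be an open set, Σ ⊆ ℝ^N a rotation-invariant (radial) domain, and z : Σ → ℝ continuous. For e ∈ Sⁿ⁻¹, write σ_e(x) = x - 2(x·e)e for the reflection across the hyperplane {x : x·e = 0} and Σ(e) = {x ∈ Σ : x·e > 0}. If z(x) ≥ z(σ_e(x)) for all x ∈ Σ(e) and all e ∈ U, and z = z ∘ σ_p for some p ∈ U, then z is radially symmetric, i.e., z(x) depends only on |x|. -/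
/-!
The reflection across the bisecting hyperplane of two points `a`, `b` of equal norm swaps them,
and `a` lies on its positive side. Hence, if the direction `e` of `a - σ_p b` lies in `U`, then
`z b = z (σ_p b) = z (σ_e a) ≤ z a`. For `⟪x, p⟫ > 0` the direction of `x - σ_p x` is `p` itself,
so for `y` close to `x` on the same sphere both `z y ≤ z x` and `z x ≤ z y` hold. Thus `z` is
locally constant, hence constant, on each open hemisphere `{⟪x, p⟫ > 0}` of a sphere, by continuity
also on the closed one, and `σ_p` carries the other half of the sphere into it.
-/

open Real Set Filter Topology Metric

namespace ReflectionSymmetry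

variable {E : Type*} [NormedAddCommGroup E] [InnerProductSpace ℝ E]

def reflect (e x : E) : E := x - (2 * inner ℝ x e) • e

theorem sub_reflect_self (p x : E) : x - reflect p x = (2 * inner ℝ x p) • p :=
  sub_sub_cancel x _

theorem norm_reflect {e : E} (he : ‖e‖ = 1) (x : E) : ‖reflect e x‖ = ‖x‖ := by
  have h : ‖reflect e x‖ ^ 2 = ‖x‖ ^ 2 := by
    rw [reflect, norm_sub_sq_real, real_inner_smul_right, norm_smul, he, Real.norm_eq_abs]
    nlinarith [sq_abs (2 * inner ℝ x e)]
  exact (sq_eq_sq₀ (norm_nonneg _) (norm_nonneg _)).mp h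

theorem inner_reflect_self {p : E} (hp : ‖p‖ = 1) (x : E) :
    inner ℝ (reflect p x) p = -inner ℝ x p := by
  rw [reflect, inner_sub_left, real_inner_smul_left, real_inner_self_eq_norm_sq, hp]
  ring

theorem two_mul_inner_sub_eq_norm_sub_sq {a b : E} (h : ‖a‖ = ‖b‖) :
    2 * inner ℝ a (a - b) = ‖a - b‖ ^ 2 := by
  rw [inner_sub_right, real_inner_self_eq_norm_sq, norm_sub_sq_real, h]
  ring

theorem inner_normalize_sub_pos {a b : E} (h : ‖a‖ = ‖b‖) (hne : a ≠ b) :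
    0 < inner ℝ a (‖a - b‖⁻¹ • (a - b)) := by
  have hpos : 0 < ‖a - b‖ := norm_pos_iff.mpr (sub_ne_zero.mpr hne)
  rw [real_inner_smul_right, ← mul_div_cancel_left₀ (inner ℝ a (a - b)) two_ne_zero,
    two_mul_inner_sub_eq_norm_sub_sq h]
  positivity

theorem reflect_normalize_sub {a b : E} (h : ‖a‖ = ‖b‖) (hne : a ≠ b) :
    reflect (‖a - b‖⁻¹ • (a - b)) a = b := by
  have hpos : ‖a - b‖ ≠ 0 := norm_ne_zero_iff.mpr (sub_ne_zero.mpr hne)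
  have hcoef : 2 * inner ℝ a (‖a - b‖⁻¹ • (a - b)) * ‖a - b‖⁻¹ = 1 := by
    rw [real_inner_smul_right, mul_left_comm, two_mul_inner_sub_eq_norm_sub_sq h]
    field_simp
  rw [reflect, smul_smul, hcoef, one_smul, sub_sub_cancel]

theorem smul_inv_norm_mem_sphere {r : ℝ} (hr : 0 ≤ r) {v : E} (hv : v ≠ 0) :
    (r * ‖v‖⁻¹) • v ∈ sphere 0 r := by
  rw [mem_sphere_zero_iff_norm, norm_smul, norm_mul, norm_inv, norm_norm, Real.norm_of_nonneg hr,
    mul_assoc, inv_mul_cancel₀ (norm_ne_zero_iff.mpr hv), mul_one]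

theorem smul_inv_norm_of_mem_sphere {r : ℝ} (hr : r ≠ 0) {v : E} (hv : v ∈ sphere 0 r) :
    (r * ‖v‖⁻¹) • v = v := by
  rw [mem_sphere_zero_iff_norm.mp hv, mul_inv_cancel₀ hr, one_smul]

theorem continuousAt_smul_inv_norm (r : ℝ) {v : E} (hv : v ≠ 0) :
    ContinuousAt (fun w : E ↦ (r * ‖w‖⁻¹) • w) v := by
  fun_prop (disch := exact norm_ne_zero_iff.mpr hv)

theorem sphere_subset_of_forall_image_eq {S : Set E}
    (hS : ∀ f : E ≃ₗᵢ[ℝ] E, f '' S = S) {x : E} (hx : x ∈ S) : sphere 0 ‖x‖ ⊆ S := by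
  intro w hw
  rw [mem_sphere_zero_iff_norm] at hw
  rw [← hS (Submodule.reflection (ℝ ∙ (x - w))ᗮ)]
  exact ⟨x, hx, Submodule.reflection_sub hw.symm⟩

variable {S U : Set E} {z : E → ℝ} {p : E}

theorem le_of_normalize_sub_reflect_mem
    (hineq : ∀ e ∈ U, ∀ x ∈ S, 0 < inner ℝ x e → z (reflect e x) ≤ z x)
    (hsym : ∀ x ∈ S, z (reflect p x) = z x) (hp : ‖p‖ = 1)
    {a b : E} (ha : a ∈ S) (hb : b ∈ S) (hab : ‖a‖ = ‖b‖) (hne : a ≠ reflect p b)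
    (hU : ‖a - reflect p b‖⁻¹ • (a - reflect p b) ∈ U) : z b ≤ z a := by
  have hnorm : ‖a‖ = ‖reflect p b‖ := hab.trans (norm_reflect hp b).symm
  calc z b = z (reflect p b) := (hsym b hb).symm
    _ = z (reflect (‖a - reflect p b‖⁻¹ • (a - reflect p b)) a) := by
      rw [reflect_normalize_sub hnorm hne]
    _ ≤ z a := hineq _ hU a ha (inner_normalize_sub_pos hnorm hne)

theorem tendsto_normalize_sub_reflect (hp : ‖p‖ = 1) {x : E} (hx : 0 < inner ℝ x p) :
    Tendsto (fun ab : E × E ↦ ‖ab.1 - reflect p ab.2‖⁻¹ • (ab.1 - reflect p ab.2))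
      (𝓝 (x, x)) (𝓝 p) := by
  have hne : x - reflect p x ≠ 0 := by
    rw [sub_reflect_self]
    exact smul_ne_zero (by positivity) (norm_ne_zero_iff.mp (by simp [hp]))
  have hcont : Continuous fun ab : E × E ↦ ab.1 - reflect p ab.2 := by
    unfold reflect; fun_prop
  have hlim : ‖x - reflect p x‖⁻¹ • (x - reflect p x) = p := by
    rw [sub_reflect_self, norm_smul, hp, mul_one, Real.norm_eq_abs, abs_of_pos (by positivity),
      smul_smul, inv_mul_cancel₀ (by positivity), one_smul]
  have hF : ContinuousAt (fun ab : E × E ↦ ‖ab.1 - reflect p ab.2‖⁻¹ • (ab.1 - reflect p ab.2))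
      (x, x) :=
    ((continuous_norm.comp hcont).continuousAt.inv₀ (norm_ne_zero_iff.mpr hne)).smul
      hcont.continuousAt
  simpa only [hlim] using hF.tendsto

theorem eventually_normalize_sub_reflect_mem (hp : ‖p‖ = 1) (hU : U ∈ 𝓝[sphere 0 1] p)
    {x : E} (hx : 0 < inner ℝ x p) :
    ∀ᶠ ab : E × E in 𝓝 (x, x), ab.1 ≠ reflect p ab.2 ∧
      ‖ab.1 - reflect p ab.2‖⁻¹ • (ab.1 - reflect p ab.2) ∈ U := by
  have hp0 : p ≠ 0 := norm_ne_zero_iff.mp (by simp [hp])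
  filter_upwards [tendsto_normalize_sub_reflect hp hx
    ((mem_nhdsWithin_iff_eventually.mp hU).and (eventually_ne_nhds hp0))] with ab ⟨hmem, hne⟩
  have hsub : ab.1 - reflect p ab.2 ≠ 0 := right_ne_zero_of_smul hne
  exact ⟨sub_ne_zero.mp hsub, hmem (mem_sphere_zero_iff_norm.mpr (norm_smul_inv_norm hsub))⟩

theorem eventually_eq_of_inner_pos
    (hineq : ∀ e ∈ U, ∀ x ∈ S, 0 < inner ℝ x e → z (reflect e x) ≤ z x)
    (hsym : ∀ x ∈ S, z (reflect p x) = z x) (hp : ‖p‖ = 1) (hU : U ∈ 𝓝[sphere 0 1] p)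
    {r : ℝ} (hS : sphere 0 r ⊆ S) {x : E} (hx : x ∈ sphere 0 r) (hxp : 0 < inner ℝ x p) :
    ∀ᶠ y in 𝓝 x, y ∈ sphere 0 r → z y = z x := by
  have hgood := eventually_normalize_sub_reflect_mem hp hU hxp
  filter_upwards [(tendsto_id.prodMk_nhds tendsto_const_nhds).eventually hgood,
    (tendsto_const_nhds.prodMk_nhds tendsto_id).eventually hgood] with y ⟨hne₁, hU₁⟩ ⟨hne₂, hU₂⟩ hy
  have hxy : ‖y‖ = ‖x‖ := by rw [mem_sphere_zero_iff_norm.mp hy, mem_sphere_zero_iff_norm.mp hx]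
  exact le_antisymm
    (le_of_normalize_sub_reflect_mem hineq hsym hp (hS hx) (hS hy) hxy.symm hne₂ hU₂)
    (le_of_normalize_sub_reflect_mem hineq hsym hp (hS hy) (hS hx) hxy hne₁ hU₁)

theorem eq_of_inner_pos
    (hineq : ∀ e ∈ U, ∀ x ∈ S, 0 < inner ℝ x e → z (reflect e x) ≤ z x)
    (hsym : ∀ x ∈ S, z (reflect p x) = z x) (hp : ‖p‖ = 1) (hU : U ∈ 𝓝[sphere 0 1] p)
    {r : ℝ} (hr : 0 < r) (hS : sphere 0 r ⊆ S) {x y : E} (hx : x ∈ sphere 0 r)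
    (hy : y ∈ sphere 0 r) (hxp : 0 < inner ℝ x p) (hyp : 0 < inner ℝ y p) : z x = z y := by
  -- The open hemisphere is the radial image of the convex half-space `{⟪v, p⟫ > 0}`.
  have hconv : Convex ℝ {v : E | 0 < inner ℝ v p} :=
    convex_halfSpace_gt ⟨fun a b ↦ inner_add_left a b p, fun c a ↦ real_inner_smul_left a p c⟩ 0
  have hlocal : ∀ v ∈ {v : E | 0 < inner ℝ v p},
      (↑(fun w : E ↦ z ((r * ‖w‖⁻¹) • w)) : Germ (𝓝 v) ℝ).IsConstant := by
    intro v hv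
    have hv0 : v ≠ 0 := by rintro rfl; simp at hv
    have hproj : 0 < inner ℝ ((r * ‖v‖⁻¹) • v) p := by
      rw [real_inner_smul_left]; exact mul_pos (by positivity) hv
    refine ⟨z ((r * ‖v‖⁻¹) • v), ?_⟩
    filter_upwards [(continuousAt_smul_inv_norm r hv0).eventually
        (eventually_eq_of_inner_pos hineq hsym hp hU hS
          (smul_inv_norm_mem_sphere hr.le hv0) hproj),
      eventually_ne_nhds hv0] with w hw hw0
    exact hw (smul_inv_norm_mem_sphere hr.le hw0)
  have := eq_of_germ_isConstant_on hlocal hconv.isPreconnected hxp hyp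
  rwa [smul_inv_norm_of_mem_sphere hr.ne' hx, smul_inv_norm_of_mem_sphere hr.ne' hy] at this

theorem eq_of_inner_nonneg
    (hineq : ∀ e ∈ U, ∀ x ∈ S, 0 < inner ℝ x e → z (reflect e x) ≤ z x)
    (hsym : ∀ x ∈ S, z (reflect p x) = z x) (hp : ‖p‖ = 1) (hU : U ∈ 𝓝[sphere 0 1] p)
    (hz : ContinuousOn z S) {r : ℝ} (hr : 0 < r) (hS : sphere 0 r ⊆ S) {x : E}
    (hx : x ∈ sphere 0 r) (hxp : 0 ≤ inner ℝ x p) : z x = z (r • p) := by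
  set γ : ℝ → E := fun ε ↦ (r * ‖x + ε • p‖⁻¹) • (x + ε • p)
  have hx0 : x ≠ 0 := ne_zero_of_mem_sphere hr.ne' ⟨x, hx⟩
  have hγ0 : γ 0 = x := by
    simp only [γ, zero_smul, add_zero, smul_inv_norm_of_mem_sphere hr.ne' hx]
  have hγ : ∀ ε > 0, γ ε ∈ sphere 0 r ∧ 0 < inner ℝ (γ ε) p := by
    intro ε hε
    have hpos : 0 < inner ℝ (x + ε • p) p := by
      rw [inner_add_left, real_inner_smul_left, real_inner_self_eq_norm_sq, hp]; linarith
    have hne : x + ε • p ≠ 0 := by rintro h; simp [h] at hpos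
    refine ⟨smul_inv_norm_mem_sphere hr.le hne, ?_⟩
    rw [real_inner_smul_left]
    exact mul_pos (by positivity) hpos
  have hrp_mem : r • p ∈ sphere 0 r := by simp [norm_smul, hp, hr.le]
  have hrp_pos : 0 < inner ℝ (r • p) p := by
    rw [real_inner_smul_left, real_inner_self_eq_norm_sq, hp]; simpa using hr
  have hlim : Tendsto (z ∘ γ) (𝓝[>] 0) (𝓝 (z x)) := by
    refine (hz x (hS hx)).tendsto.comp (tendsto_nhdsWithin_iff.mpr ⟨?_, ?_⟩)
    · have hγc : ContinuousAt γ 0 := (continuousAt_smul_inv_norm r hx0).comp_of_eq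
        (f := fun ε : ℝ ↦ x + ε • p) (by fun_prop) (by simp)
      exact hγ0 ▸ hγc.tendsto.mono_left nhdsWithin_le_nhds
    · filter_upwards [self_mem_nhdsWithin] with ε hε using hS (hγ ε hε).1
  refine tendsto_nhds_unique hlim (tendsto_const_nhds.congr' ?_)
  filter_upwards [self_mem_nhdsWithin] with ε hε
  exact (eq_of_inner_pos hineq hsym hp hU hr hS (hγ ε hε).1 hrp_mem (hγ ε hε).2 hrp_pos).symm

theorem eq_smul_of_mem_sphere
    (hineq : ∀ e ∈ U, ∀ x ∈ S, 0 < inner ℝ x e → z (reflect e x) ≤ z x)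
    (hsym : ∀ x ∈ S, z (reflect p x) = z x) (hp : ‖p‖ = 1) (hU : U ∈ 𝓝[sphere 0 1] p)
    (hz : ContinuousOn z S) {r : ℝ} (hr : 0 < r) (hS : sphere 0 r ⊆ S) {x : E}
    (hx : x ∈ sphere 0 r) : z x = z (r • p) := by
  rcases le_or_gt 0 (inner ℝ x p) with hxp | hxp
  · exact eq_of_inner_nonneg hineq hsym hp hU hz hr hS hx hxp
  · have hrx : reflect p x ∈ sphere 0 r := by
      rw [mem_sphere_zero_iff_norm, norm_reflect hp]; exact mem_sphere_zero_iff_norm.mp hx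
    rw [← hsym x (hS hx)]
    exact eq_of_inner_nonneg hineq hsym hp hU hz hr hS hrx
      (by rw [inner_reflect_self hp]; linarith)

theorem eq_of_norm_eq_of_le_reflect (hS : ∀ f : E ≃ₗᵢ[ℝ] E, f '' S = S)
    (hineq : ∀ e ∈ U, ∀ x ∈ S, 0 < inner ℝ x e → z (reflect e x) ≤ z x)
    (hsym : ∀ x ∈ S, z (reflect p x) = z x) (hp : ‖p‖ = 1) (hU : U ∈ 𝓝[sphere 0 1] p)
    (hz : ContinuousOn z S) {x y : E} (hx : x ∈ S) (hxy : ‖x‖ = ‖y‖) :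
    z x = z y := by
  rcases (norm_nonneg x).eq_or_lt with hx0 | hx0
  · rw [norm_eq_zero.mp hx0.symm, norm_eq_zero.mp (hxy.symm.trans hx0.symm)]
  have hsphere := sphere_subset_of_forall_image_eq hS hx
  rw [eq_smul_of_mem_sphere hineq hsym hp hU hz hx0 hsphere (mem_sphere_zero_iff_norm.mpr rfl),
    eq_smul_of_mem_sphere hineq hsym hp hU hz hx0 hsphere (mem_sphere_zero_iff_norm.mpr hxy.symm)]

end ReflectionSymmetry

open ReflectionSymmetry

theorem asymptotic_symmetry_stmt_5_general {N : ℕ}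
    (S : Set (EuclideanSpace ℝ (Fin N)))
    (hSrad : ∀ f : EuclideanSpace ℝ (Fin N) ≃ₗᵢ[ℝ] EuclideanSpace ℝ (Fin N), f '' S = S)
    (U : Set (EuclideanSpace ℝ (Fin N)))
    (hUopen : ∃ V : Set (EuclideanSpace ℝ (Fin N)), IsOpen V ∧ U = V ∩ Metric.sphere 0 1)
    (z : EuclideanSpace ℝ (Fin N) → ℝ) (hz : ContinuousOn z S)
    (hineq : ∀ e ∈ U, ∀ x ∈ S, 0 < (inner ℝ x e : ℝ) →
      z (x - (2 * (inner ℝ x e : ℝ)) • e) ≤ z x)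
    (p : EuclideanSpace ℝ (Fin N)) (hp : p ∈ U)
    (hsym : ∀ x ∈ S, z (x - (2 * (inner ℝ x p : ℝ)) • p) = z x) :
    ∀ x ∈ S, ∀ y ∈ S, ‖x‖ = ‖y‖ → z x = z y := by
  obtain ⟨V, hV, rfl⟩ := hUopen
  have hU : V ∩ sphere 0 1 ∈ 𝓝[sphere 0 1] p :=
    mem_nhdsWithin.mpr ⟨V, hV, hp.1, subset_rfl⟩
  intro x hx y _ hxy
  exact eq_of_norm_eq_of_le_reflect hSrad hineq hsym (mem_sphere_zero_iff_norm.mp hp.2) hU hz hx hxy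

theorem asymptotic_symmetry_stmt_5 {N : ℕ} (hN : 2 ≤ N)
    (S : Set (EuclideanSpace ℝ (Fin N))) (hSopen : IsOpen S)
    (hSrad : ∀ f : EuclideanSpace ℝ (Fin N) ≃ₗᵢ[ℝ] EuclideanSpace ℝ (Fin N), f '' S = S)
    (U : Set (EuclideanSpace ℝ (Fin N)))
    (hUsphere : U ⊆ Metric.sphere 0 1)
    (hUopen : ∃ V : Set (EuclideanSpace ℝ (Fin N)), IsOpen V ∧ U = V ∩ Metric.sphere 0 1)
    (z : EuclideanSpace ℝ (Fin N) → ℝ) (hz : ContinuousOn z S)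
    (hineq : ∀ e ∈ U, ∀ x ∈ S, 0 < (inner ℝ x e : ℝ) →
      z (x - (2 * (inner ℝ x e : ℝ)) • e) ≤ z x)
    (p : EuclideanSpace ℝ (Fin N)) (hp : p ∈ U)
    (hsym : ∀ x ∈ S, z (x - (2 * (inner ℝ x p : ℝ)) • p) = z x) :
    ∀ x ∈ S, ∀ y ∈ S, ‖x‖ = ‖y‖ → z x = z y :=
  asymptotic_symmetry_stmt_5_general S hSrad U hUopen z hz hineq p hp hsym
end

section
/- Let z : ℝ^N → ℝ (N ≥ 1) be continuous with z(x) → 0 as |x| → ∞. Suppose there exist λ₀ > 0 and e₁ = (1,0,…,0) such that z(x) ≥ z(2λe₁ - x) for all x with x·e₁ > λ and all λ ∈ (-λ₀, λ₀). If z is even in x₁ (i.e., z(x₁, x') = z(-x₁, x') for all x), then z cannot satisfy z(r e₁) < 0 for any r > 0; more precisely, if z(re₁) < 0 for some r > 0 then choosing λ ∈ (0, min{r, λ₀}) and iterating the reflection inequality yields z(re₁) ≥ z((2kλ + r)e₁) for all k ∈ ℕ, contradicting the decay at infinity; hence z ≥ 0 on the positive x₁-axis. -/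
/-!
Evenness in `x₁` turns the reflection across `{x₁ = -λ}` into a translation by `2λ` along the
positive `x₁`-axis that does not increase `z`. Iterating it from `r e₁` gives points escaping to
infinity at which `z ≤ z (r e₁)`, so the decay `z → 0` forces `z (r e₁) ≥ 0`.
-/

open Real Set
open Filter Topology RealInnerProductSpace

theorem nonneg_of_le_shift_of_tendsto_zero {f : ℝ → ℝ} {d r : ℝ} (hd : 0 < d)
    (hstep : ∀ s ≥ r, f (s + d) ≤ f s) (hf : Tendsto f atTop (𝓝 0)) : 0 ≤ f r := by
  have hiter : ∀ k : ℕ, f (r + k * d) ≤ f r := by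
    intro k
    induction k with
    | zero => simp
    | succ k ih =>
      calc f (r + (k + 1 : ℕ) * d) = f (r + k * d + d) := by push_cast; ring_nf
        _ ≤ f (r + k * d) := hstep _ (by nlinarith [k.cast_nonneg (α := ℝ)])
        _ ≤ f r := ih
  have hto : Tendsto (fun k : ℕ => r + k * d) atTop atTop :=
    tendsto_atTop_add_const_left _ r (tendsto_natCast_atTop_atTop.atTop_mul_const hd)
  exact le_of_tendsto' (hf.comp hto) hiter

section Reflection

variable {E : Type*} [NormedAddCommGroup E] [InnerProductSpace ℝ E]

theorem tendsto_smul_atTop_cocompact {e : E} (he : e ≠ 0) :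
    Tendsto (fun t : ℝ => t • e) atTop (cocompact E) := by
  refine tendsto_cocompact_of_tendsto_dist_comp_atTop 0 ?_
  simp only [dist_zero_right, norm_smul, Real.norm_eq_abs]
  exact tendsto_abs_atTop_atTop.atTop_mul_const (norm_pos_iff.mpr he)

theorem le_of_reflection_of_even {z : E → ℝ} {e : E} (he : ‖e‖ = 1) {lam : ℝ}
    (hrefl : ∀ x : E, lam < ⟪x, e⟫ → z ((2 * lam) • e - x) ≤ z x)
    (heven : ∀ x : E, z (x - (2 * ⟪x, e⟫) • e) = z x) {s : ℝ} (hs : lam < s) :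
    z ((s - 2 * lam) • e) ≤ z (s • e) := by
  have hinner : ∀ t : ℝ, ⟪t • e, e⟫ = t := fun t => by
    rw [real_inner_smul_left, real_inner_self_eq_norm_sq, he, one_pow, mul_one]
  have hreflected : z ((2 * lam - s) • e) ≤ z (s • e) := by
    simpa only [sub_smul] using hrefl (s • e) (by rwa [hinner])
  have hsym : z ((s - 2 * lam) • e) = z ((2 * lam - s) • e) := by
    simpa only [hinner, ← sub_smul, show 2 * lam - s - 2 * (2 * lam - s) = s - 2 * lam by ring]
      using heven ((2 * lam - s) • e)
  exact hsym.trans_le hreflected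

end Reflection

theorem asymptotic_symmetry_stmt_19_general {N : ℕ}
    (z : EuclideanSpace ℝ (Fin (N + 1)) → ℝ)
    (hdecay : Filter.Tendsto z (Filter.cocompact (EuclideanSpace ℝ (Fin (N + 1)))) (nhds 0))
    (lam0 : ℝ) (hlam0 : 0 < lam0)
    (hrefl : ∀ lam : ℝ, -lam0 < lam → lam < lam0 →
      ∀ x : EuclideanSpace ℝ (Fin (N + 1)),
        lam < (inner ℝ x (EuclideanSpace.single 0 1 : EuclideanSpace ℝ (Fin (N + 1))) : ℝ) →
        z ((2 * lam) • (EuclideanSpace.single 0 1 : EuclideanSpace ℝ (Fin (N + 1))) - x)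
          ≤ z x)
    (heven : ∀ x : EuclideanSpace ℝ (Fin (N + 1)),
      z (x - (2 * (inner ℝ x (EuclideanSpace.single 0 1 :
          EuclideanSpace ℝ (Fin (N + 1))) : ℝ)) •
        (EuclideanSpace.single 0 1 : EuclideanSpace ℝ (Fin (N + 1)))) = z x) :
    ∀ r : ℝ, 0 < r →
      0 ≤ z (r • (EuclideanSpace.single 0 1 : EuclideanSpace ℝ (Fin (N + 1)))) := by
  intro r hr
  set e : EuclideanSpace ℝ (Fin (N + 1)) := EuclideanSpace.single 0 1
  have he : ‖e‖ = 1 := by simp [e]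
  have hstep : ∀ s ≥ r, z ((s + lam0) • e) ≤ z (s • e) := fun s hs => by
    have := le_of_reflection_of_even he (hrefl (-(lam0 / 2)) (by linarith) (by linarith)) heven
      (s := s) (by linarith)
    rwa [show s - 2 * -(lam0 / 2) = s + lam0 by ring] at this
  have hray : Tendsto (fun t : ℝ => z (t • e)) atTop (𝓝 0) :=
    hdecay.comp (tendsto_smul_atTop_cocompact (norm_ne_zero_iff.mp (he ▸ one_ne_zero)))
  exact nonneg_of_le_shift_of_tendsto_zero hlam0 hstep hray

theorem asymptotic_symmetry_stmt_19 {N : ℕ}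
    (z : EuclideanSpace ℝ (Fin (N + 1)) → ℝ) (hz : Continuous z)
    (hdecay : Filter.Tendsto z (Filter.cocompact (EuclideanSpace ℝ (Fin (N + 1)))) (nhds 0))
    (lam0 : ℝ) (hlam0 : 0 < lam0)
    (hrefl : ∀ lam : ℝ, -lam0 < lam → lam < lam0 →
      ∀ x : EuclideanSpace ℝ (Fin (N + 1)),
        lam < (inner ℝ x (EuclideanSpace.single 0 1 : EuclideanSpace ℝ (Fin (N + 1))) : ℝ) →
        z ((2 * lam) • (EuclideanSpace.single 0 1 : EuclideanSpace ℝ (Fin (N + 1))) - x)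
          ≤ z x)
    (heven : ∀ x : EuclideanSpace ℝ (Fin (N + 1)),
      z (x - (2 * (inner ℝ x (EuclideanSpace.single 0 1 :
          EuclideanSpace ℝ (Fin (N + 1))) : ℝ)) •
        (EuclideanSpace.single 0 1 : EuclideanSpace ℝ (Fin (N + 1)))) = z x) :
    ∀ r : ℝ, 0 < r →
      0 ≤ z (r • (EuclideanSpace.single 0 1 : EuclideanSpace ℝ (Fin (N + 1)))) :=
  asymptotic_symmetry_stmt_19_general z hdecay lam0 hlam0 hrefl heven
end
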